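/- Let c ∈ (0,1) with −(1/2)·log(1−c) < 1, let J ≥ 2 be an integer, and let Γ : {1,…,J} × ℤ → ℝ be a function with 0 ≤ Γ(k, I) ≤ 1 for all k and I, Γ(k, I) = 1 whenever I ≤ 0, Γ(1, I) = 0 whenever I ≥ 1, and Γ(k+1, I) ≤ (1−c)^{√I − 1} + I^{1 + (k−1)/2} · Γ(k, ⌊√I⌋ − k + 1) for all 1 ≤ k < J and integers I ≥ 1. Set ε = −(1/2)·log(1−c), c₃ = max(2, −log(1−c)), I₀(ε, J) = ( c₃ · (J·2^J/ε) · log(J·2^J/ε) )^{2^{J−1}}, and I(J) = max( ⌈I₀(ε, J)⌉, ⌈J/c⌉^{2^{J−1}} ). Then Γ(J, I(J)) ≤ exp(−J/2). -/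

import Mathlib

/-- The threshold `I₀(ε,k) = (c₃·(k·2^k/ε)·log(k·2^k/ε))^{2^{k−1}}`. -/
noncomputable def Ithr (c₃ ε : ℝ) (k : ℕ) : ℝ :=
  (c₃ * ((k * 2 ^ k) / ε) * Real.log ((k * 2 ^ k) / ε)) ^ (2 ^ (k - 1))

/-!
Unwinding the recursion from level `J` down to level `1`, the argument moves by
`I ↦ ⌊√I⌋ - k + 1`, so an argument in `[A^{2^{J-1}}, (2A)^{2^{J-1}}]` stays, at level `k`,
in the window `[A^{2^{k-1}} - 3k, (2A)^{2^{k-1}}]`. On these windows `√I - 1 ≥ A - 3`, so each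
level contributes at most `(1-c)^{A-3}`, while the factors `I^{(k+1)/2}` pile up to
`(2A)^{(k-1)2^{k-1}}`; hence `Γ(J, I) ≤ (J-1)(2A)^{(J-1)2^{J-1}}(1-c)^{A-3}`.
With `A ≥ 2X log X`, `X = J 2^J / ε`, and `(1-c)^A = e^{-2εA}`, the exponential decay beats
this polynomial loss by a margin of `J/2`. The term `⌈J/c⌉^{2^{J-1}}` only enlarges `A`.
-/

open Real

lemma floor_sqrt_window {A a b : ℝ} {k : ℕ} {I : ℤ} (hA : 2 * ((k : ℝ) + 3) ≤ A) (haA : A ≤ a)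
    (hlo : a ^ 2 - 3 * ((k : ℝ) + 2) ≤ I) (hhi : (I : ℝ) ≤ b ^ 2) (hb : 0 ≤ b) :
    1 ≤ I ∧ A - 3 ≤ √(I : ℝ) - 1 ∧
      a - 3 * ((k : ℝ) + 1) ≤ ((⌊√(I : ℝ)⌋ - ((k + 1 : ℕ) : ℤ) + 1 : ℤ) : ℝ) ∧
      ((⌊√(I : ℝ)⌋ - ((k + 1 : ℕ) : ℤ) + 1 : ℤ) : ℝ) ≤ b := by
  have hk : (0 : ℝ) ≤ k := k.cast_nonneg
  have hA2 : A - 2 ≤ √(I : ℝ) := (le_abs_self _).trans (abs_le_sqrt (by nlinarith))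
  have ha : a - ((k : ℝ) + 2) ≤ √(I : ℝ) := (le_abs_self _).trans (abs_le_sqrt (by nlinarith))
  have hb' : √(I : ℝ) ≤ b := sqrt_le_iff.mpr ⟨hb, hhi⟩
  have hfloor := Int.floor_le √(I : ℝ)
  have hfloor' := Int.sub_one_lt_floor √(I : ℝ)
  refine ⟨?_, by linarith, ?_, ?_⟩
  · have : (1 : ℝ) ≤ I := by nlinarith
    exact_mod_cast this
  · push_cast; linarith
  · push_cast; linarith

lemma rpow_one_add_half_le {x y : ℝ} {k : ℕ} (hx : 0 ≤ x) (hy : 0 ≤ y)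
    (hxy : x ≤ y ^ 2 ^ (k + 1)) : x ^ (1 + (k : ℝ) / 2) ≤ y ^ ((k + 2) * 2 ^ k) :=
  calc x ^ (1 + (k : ℝ) / 2) ≤ (y ^ 2 ^ (k + 1)) ^ (1 + (k : ℝ) / 2) :=
        rpow_le_rpow hx hxy (by positivity)
    _ = y ^ ((k + 2) * 2 ^ k) := by
      rw [← rpow_natCast, ← rpow_natCast, ← rpow_mul hy]
      push_cast
      ring_nf

theorem sqrt_recursion_bound {Γ : ℕ → ℤ → ℝ} {q A : ℝ} {J : ℕ} (hq0 : 0 < q) (hq1 : q ≤ 1)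
    (hA : 2 * ((J : ℝ) + 2) ≤ A) (hΓ_one : ∀ I : ℤ, 1 ≤ I → Γ 1 I = 0)
    (hrec : ∀ k : ℕ, 1 ≤ k → k < J → ∀ I : ℤ, 1 ≤ I →
      Γ (k + 1) I ≤ q ^ (√(I : ℝ) - 1)
        + (I : ℝ) ^ (1 + ((k : ℝ) - 1) / 2) * Γ k (⌊√(I : ℝ)⌋ - (k : ℤ) + 1)) :
    ∀ k : ℕ, k < J → ∀ I : ℤ, A ^ 2 ^ k - 3 * ((k : ℝ) + 1) ≤ I → (I : ℝ) ≤ (2 * A) ^ 2 ^ k →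
      Γ (k + 1) I ≤ k * (2 * A) ^ (k * 2 ^ k) * q ^ (A - 3) := by
  have hA1 : 1 ≤ A := by linarith [J.cast_nonneg (α := ℝ)]
  intro k
  induction k with
  | zero =>
    intro _ I hlo _
    rw [hΓ_one I (by norm_num at hlo; exact_mod_cast (by linarith : (1 : ℝ) ≤ I))]
    simp
  | succ k ih =>
    intro hkJ I hlo hhi
    have hkJ' : (k : ℝ) + 1 < J := by exact_mod_cast hkJ
    obtain ⟨hI, hsqrt, hlo', hhi'⟩ := floor_sqrt_window (k := k) (I := I) (by linarith)
      (le_self_pow₀ hA1 (pow_ne_zero k two_ne_zero))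
      (by rw [← pow_mul, ← pow_succ]; push_cast at hlo ⊢; linarith)
      (by rwa [← pow_mul, ← pow_succ]) (by positivity)
    have hcoef : (I : ℝ) ^ (1 + (((k + 1 : ℕ) : ℝ) - 1) / 2) ≤ (2 * A) ^ ((k + 2) * 2 ^ k) := by
      rw [Nat.cast_succ, add_sub_cancel_right]
      exact rpow_one_add_half_le (by exact_mod_cast (by omega : (0 : ℤ) ≤ I)) (by positivity) hhi
    have hpow : 1 ≤ (2 * A) ^ ((k + 1) * 2 ^ (k + 1)) := one_le_pow₀ (by linarith)
    calc Γ (k + 1 + 1) I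
        ≤ q ^ (A - 3) +
            (2 * A) ^ ((k + 2) * 2 ^ k) * (k * (2 * A) ^ (k * 2 ^ k) * q ^ (A - 3)) := by
          refine (hrec (k + 1) (by omega) hkJ I hI).trans (add_le_add
            (rpow_le_rpow_of_exponent_ge hq0 hq1 hsqrt) ?_)
          exact (mul_le_mul_of_nonneg_left (ih (by omega) _ hlo' hhi') (by positivity)).trans
            (mul_le_mul_of_nonneg_right hcoef (by positivity))
      _ = (1 + k * (2 * A) ^ ((k + 1) * 2 ^ (k + 1))) * q ^ (A - 3) := by ring
      _ ≤ ((k + 1 : ℕ) : ℝ) * (2 * A) ^ ((k + 1) * 2 ^ (k + 1)) * q ^ (A - 3) := by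
          gcongr
          push_cast
          nlinarith

lemma pow_max_le_max_ceil {B C : ℝ} (hC : 0 ≤ C) (n : ℕ) :
    max B C ^ n ≤ ((max ⌈B ^ n⌉ (⌈C⌉ ^ n) : ℤ) : ℝ) := by
  push_cast
  rcases le_total B C with h | h
  · rw [max_eq_right h]
    exact le_max_of_le_right (pow_le_pow_left₀ hC (Int.le_ceil C) n)
  · rw [max_eq_left h]
    exact le_max_of_le_left (Int.le_ceil _)

lemma max_ceil_le_two_mul_pow {B C : ℝ} (hB : 0 ≤ B) (hC : 0 ≤ C) (h1 : 1 ≤ max B C) (n : ℕ) :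
    ((max ⌈B ^ n⌉ (⌈C⌉ ^ n) : ℤ) : ℝ) ≤ (2 * max B C) ^ n := by
  have hceil : max ⌈B ^ n⌉ (⌈C⌉ ^ n) ≤ ⌈max B C⌉ ^ n := by
    refine max_le (Int.ceil_le.mpr ?_) (pow_le_pow_left₀ (Int.ceil_nonneg hC)
      (Int.ceil_mono (le_max_right B C)) n)
    push_cast
    exact pow_le_pow_left₀ hB ((le_max_left B C).trans (Int.le_ceil _)) n
  calc ((max ⌈B ^ n⌉ (⌈C⌉ ^ n) : ℤ) : ℝ) ≤ (⌈max B C⌉ : ℝ) ^ n := by exact_mod_cast hceil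
    _ ≤ (2 * max B C) ^ n :=
      pow_le_pow_left₀ (by positivity) (by linarith [Int.ceil_lt_add_one (max B C)]) n

lemma log_le_log_add_div_sub_one {a b : ℝ} (ha : 0 < a) (hb : 0 < b) :
    log a ≤ log b + a / b - 1 := by
  have := log_le_sub_one_of_pos (div_pos ha hb)
  rw [log_div ha.ne' hb.ne'] at this
  linarith

lemma two_le_log_of_eight_le {X : ℝ} (hX : 8 ≤ X) : 2 ≤ log X :=
  calc (2 : ℝ) ≤ 3 * log 2 := by linarith [log_two_gt_d9]
    _ = log 8 := by rw [show (8 : ℝ) = 2 ^ 3 by norm_num, log_pow]; norm_num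
    _ ≤ log X := log_le_log (by norm_num) hX

section Scale

variable {ε X : ℝ} {k : ℕ}

lemma four_mul_succ_le (hk : 1 ≤ k) (hε0 : 0 < ε) (hε1 : ε < 1)
    (hX : ε * X = (k + 1) * 2 ^ (k + 1)) : 4 * ((k : ℝ) + 1) ≤ X := by
  have h4 : (4 : ℝ) ≤ 2 ^ (k + 1) := by
    calc (4 : ℝ) = 2 ^ 2 := by norm_num
      _ ≤ 2 ^ (k + 1) := pow_le_pow_right₀ one_le_two (by omega)
  have hεX : 4 * ((k : ℝ) + 1) ≤ ε * X := by rw [hX]; nlinarith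
  have hX0 : 0 < X := by nlinarith
  nlinarith

theorem mul_pow_mul_exp_le_exp_neg_half {A : ℝ} (hk : 1 ≤ k) (hε0 : 0 < ε) (hε1 : ε < 1)
    (hX : ε * X = (k + 1) * 2 ^ (k + 1)) (hA : 2 * X * log X ≤ A) :
    k * (2 * A) ^ (k * 2 ^ k) * exp (-(2 * ε) * (A - 3)) ≤ exp (-((k : ℝ) + 1) / 2) := by
  set N : ℝ := ((k : ℝ) + 1) * 2 ^ k
  set L := log X
  have hk1 : (1 : ℝ) ≤ k := by exact_mod_cast hk
  have h2k : (2 : ℝ) ≤ 2 ^ k := by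
    calc (2 : ℝ) = 2 ^ 1 := by norm_num
      _ ≤ 2 ^ k := pow_le_pow_right₀ one_le_two hk
  have hN : 4 ≤ N := by nlinarith
  have hεX : ε * X = 2 * N := by rw [hX]; ring
  have hX8 : 8 ≤ X := by linarith [four_mul_succ_le hk hε0 hε1 hX]
  have hL : 2 ≤ L := two_le_log_of_eight_le hX8
  have hXL : 0 < 2 * X * L := by positivity
  have hA1 : 1 ≤ 2 * A := by nlinarith
  have hA0 : 0 < A := by linarith
  have hlogB : log (2 * (2 * X * L)) ≤ 2 * L + 2 := by
    rw [show 2 * (2 * X * L) = 4 * X * L by ring, log_mul (by positivity) (by positivity),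
      log_mul (by norm_num) (by positivity)]
    linarith [log_le_sub_one_of_pos (show (0 : ℝ) < 4 by norm_num),
      log_le_sub_one_of_pos (show 0 < L by linarith)]
  -- log-linearizing `log (2A)` at `2B`, `B = 2XL`, costs only `A / B`, which `2εA` absorbs
  have hlogA : log (2 * A) ≤ 2 * L + 1 + A / (2 * X * L) := by
    have := log_le_log_add_div_sub_one (show 0 < 2 * A by linarith)
      (show 0 < 2 * (2 * X * L) by linarith)
    rw [mul_div_mul_left _ _ two_ne_zero] at this
    linarith
  have hNA : N * (A / (2 * X * L)) ≤ ε * A / 8 := by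
    rw [show N = ε * X / 2 by linarith, show ε * X / 2 * (A / (2 * X * L)) = ε * A / (4 * L) by
      field_simp; ring]
    gcongr
    linarith
  have hexp : (k * 2 ^ k : ℕ) * log (2 * A) ≤ N * (2 * L + 1 + A / (2 * X * L)) := by
    have : ((k * 2 ^ k : ℕ) : ℝ) ≤ N := by push_cast; nlinarith
    exact mul_le_mul this hlogA (log_nonneg hA1) (by positivity)
  have hεA : 4 * N * L ≤ ε * A := by nlinarith
  calc k * (2 * A) ^ (k * 2 ^ k) * exp (-(2 * ε) * (A - 3))
      ≤ exp (k + 1) * exp ((k * 2 ^ k : ℕ) * log (2 * A)) * exp (-(2 * ε) * (A - 3)) := by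
        rw [← log_pow, exp_log (by positivity)]
        gcongr
        linarith [add_one_le_exp ((k : ℝ) + 1)]
    _ = exp ((k + 1) + (k * 2 ^ k : ℕ) * log (2 * A) - 2 * ε * (A - 3)) := by
        rw [← exp_add, ← exp_add]; ring_nf
    _ ≤ exp (-((k : ℝ) + 1) / 2) := by
        gcongr
        nlinarith

end Scale

theorem gamma_at_IJ_small_general (c : ℝ) (hc : c ∈ Set.Ioo (0 : ℝ) 1)
    (hε1 : -(1 / 2) * Real.log (1 - c) < 1) (J : ℕ) (hJ : 2 ≤ J)
    (Γ : ℕ → ℤ → ℝ)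
    (hΓ_one : ∀ I : ℤ, 1 ≤ I → Γ 1 I = 0)
    (hrec : ∀ k : ℕ, 1 ≤ k → k < J → ∀ I : ℤ, 1 ≤ I →
      Γ (k + 1) I ≤ (1 - c) ^ (Real.sqrt I - 1)
        + (I : ℝ) ^ (1 + ((k : ℝ) - 1) / 2) * Γ k (⌊Real.sqrt I⌋ - (k : ℤ) + 1)) :
    Γ J (max ⌈Ithr (max 2 (-Real.log (1 - c))) (-(1 / 2) * Real.log (1 - c)) J⌉
          (⌈(J : ℝ) / c⌉ ^ (2 ^ (J - 1))))
      ≤ Real.exp (-(J : ℝ) / 2) := by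
  obtain ⟨hc0, hc1⟩ := hc
  obtain ⟨k, rfl⟩ : ∃ k, J = k + 1 := ⟨J - 1, by omega⟩
  set ε := -(1 / 2) * log (1 - c)
  have hlog : log (1 - c) = -(2 * ε) := by ring
  have hε0 : 0 < ε := by linarith [log_neg (by linarith : 0 < 1 - c) (by linarith)]
  set X : ℝ := ((k + 1 : ℕ) : ℝ) * 2 ^ (k + 1) / ε
  have hX : ε * X = (k + 1) * 2 ^ (k + 1) := by push_cast [X]; field_simp
  have hk : (1 : ℝ) ≤ k := by exact_mod_cast (by omega : 1 ≤ k)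
  have hX4 := four_mul_succ_le (by omega) hε0 hε1 hX
  have hL := two_le_log_of_eight_le (X := X) (by linarith)
  set A := max (2 * X * log X) ((k + 1 : ℕ) / c)
  have hA : 2 * X * log X ≤ A := le_max_left _ _
  have hA_large : 2 * (((k + 1 : ℕ) : ℝ) + 2) ≤ A := by push_cast; nlinarith
  have hIthr : Ithr (max 2 (-log (1 - c))) ε (k + 1) = (2 * X * log X) ^ 2 ^ k := by
    rw [max_eq_left (by linarith)]; rfl
  rw [hIthr, Nat.add_sub_cancel]
  have hlo := pow_max_le_max_ceil (B := 2 * X * log X) (C := (k + 1 : ℕ) / c)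
    (by positivity) (2 ^ k)
  have hhi := max_ceil_le_two_mul_pow (B := 2 * X * log X) (C := (k + 1 : ℕ) / c) (n := 2 ^ k)
    (by positivity) (by positivity) (by nlinarith)
  calc _ ≤ k * (2 * A) ^ (k * 2 ^ k) * (1 - c) ^ (A - 3) :=
        sqrt_recursion_bound (by linarith) (by linarith) hA_large hΓ_one hrec k (by omega) _
          (by linarith) hhi
    _ = k * (2 * A) ^ (k * 2 ^ k) * exp (-(2 * ε) * (A - 3)) := by
        rw [rpow_def_of_pos (by linarith), hlog]
    _ ≤ exp (-((k : ℝ) + 1) / 2) := mul_pow_mul_exp_le_exp_neg_half (by omega) hε0 hε1 hX hA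
    _ = exp (-((k + 1 : ℕ) : ℝ) / 2) := by push_cast; rfl

/-- Quantitative form of the Corollary `Γ̃_J(I(J)) → 0`: with
`ε = −(1/2)·log(1−c)`, `c₃ = max(2, −log(1−c))` and
`I(J) = max(⌈I₀(ε,J)⌉, ⌈J/c⌉^{2^{J−1}})`, one has `Γ(J, I(J)) ≤ exp(−J/2)`. -/
theorem gamma_at_IJ_small (c : ℝ) (hc : c ∈ Set.Ioo (0 : ℝ) 1)
    (hε1 : -(1 / 2) * Real.log (1 - c) < 1) (J : ℕ) (hJ : 2 ≤ J)
    (Γ : ℕ → ℤ → ℝ)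
    (hΓ01 : ∀ k : ℕ, ∀ I : ℤ, 1 ≤ k → k ≤ J → 0 ≤ Γ k I ∧ Γ k I ≤ 1)
    (hΓ_nonpos : ∀ k : ℕ, ∀ I : ℤ, 1 ≤ k → k ≤ J → I ≤ 0 → Γ k I = 1)
    (hΓ_one : ∀ I : ℤ, 1 ≤ I → Γ 1 I = 0)
    (hrec : ∀ k : ℕ, 1 ≤ k → k < J → ∀ I : ℤ, 1 ≤ I →
      Γ (k + 1) I ≤ (1 - c) ^ (Real.sqrt I - 1)
        + (I : ℝ) ^ (1 + ((k : ℝ) - 1) / 2) * Γ k (⌊Real.sqrt I⌋ - (k : ℤ) + 1)) :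
    Γ J (max ⌈Ithr (max 2 (-Real.log (1 - c))) (-(1 / 2) * Real.log (1 - c)) J⌉
          (⌈(J : ℝ) / c⌉ ^ (2 ^ (J - 1))))
      ≤ Real.exp (-(J : ℝ) / 2) :=
  gamma_at_IJ_small_general c hc hε1 J hJ Γ hΓ_one hrec
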